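/- arXiv:0710.5893 — 2 statements merged into one kernel-verified Lean document; each statement's English description precedes it below -/
import Mathlib

section
/- Let R be a ring, G a finite group of order n with listing g_1, …, g_n, and y, v ∈ RG with RG-matrices Y = σ(y) and V = σ(v). Let ȳ denote the first row of Y (the row indexed by g_1). Then YV = 0 as matrices if and only if the row vector ȳV = 0. -/
/-!
The `RG`-matrix map `σ` is multiplicative, so `Y * V = σ(y * v)`. Each row of `σ(w)` lists every
coefficient of `w` (the entry `(i, j)` is `w` at `g_i⁻¹ g_j`, and `g_i⁻¹ g_j` runs over all of `G`
as `j` does), so a single row of `σ(y * v)` vanishes iff `y * v = 0` iff the whole matrix vanishes.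
-/

/-- The `RG`-matrix of an element `w` of the group ring `RG`, relative to a
listing `g : Fin n ≃ G` of the elements of `G`. -/
noncomputable def rgMatrix {R : Type*} [Semiring R] {G : Type*} [Group G] {n : ℕ}
    (g : Fin n ≃ G) (w : MonoidAlgebra R G) : Matrix (Fin n) (Fin n) R :=
  Matrix.of fun i j => w.coeff ((g i)⁻¹ * g j)

section RGMatrix

variable {R : Type*} [Semiring R] {G : Type*} [Group G] {n : ℕ} (g : Fin n ≃ G)

theorem rgMatrix_mul (y v : MonoidAlgebra R G) :
    rgMatrix g (y * v) = rgMatrix g y * rgMatrix g v := by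
  have : Fintype G := Fintype.ofEquiv (Fin n) g
  ext i j
  simp only [rgMatrix, Matrix.mul_apply, Matrix.of_apply, MonoidAlgebra.coeff_mul_apply_left]
  rw [Finsupp.sum_fintype _ _ (by simp)]
  symm
  refine Fintype.sum_equiv (g.trans (Equiv.mulLeft (g i)⁻¹)) _ _ fun k ↦ ?_
  simp only [Equiv.trans_apply, Equiv.coe_mulLeft, mul_inv_rev, inv_inv, mul_assoc,
    mul_inv_cancel_left]

theorem rgMatrix_row_eq_zero_iff (w : MonoidAlgebra R G) (i : Fin n) :
    rgMatrix g w i = 0 ↔ w = 0 := by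
  refine ⟨fun h ↦ ?_, by rintro rfl; ext; simp [rgMatrix]⟩
  ext x
  simpa [rgMatrix] using congrFun h (g.symm (g i * x))

theorem rgMatrix_eq_zero_iff (w : MonoidAlgebra R G) : rgMatrix g w = 0 ↔ w = 0 :=
  ⟨fun h ↦ (rgMatrix_row_eq_zero_iff g w (g.symm 1)).1 (congrFun h _),
    by rintro rfl; ext; simp [rgMatrix]⟩

end RGMatrix

/-- for `y, v ∈ RG` with `Y = σ(y)`, `V = σ(v)`, and `ȳ` the first row
of `Y` (the row indexed by `g_1`), one has `Y * V = 0` iff `ȳ ᵥ* V = 0`. -/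
theorem stmt6 {R : Type*} [Ring R] {G : Type*} [Group G] {n : ℕ} [NeZero n]
    (g : Fin n ≃ G) (y v : MonoidAlgebra R G) :
    rgMatrix g y * rgMatrix g v = 0 ↔
      Matrix.vecMul (rgMatrix g y 0) (rgMatrix g v) = 0 := by
  rw [← Matrix.mul_apply_eq_vecMul, ← rgMatrix_mul, rgMatrix_eq_zero_iff,
    rgMatrix_row_eq_zero_iff]
end

section
/- Let R be a field, G a finite group of order n with listing g_1, …, g_n, and u ∈ RG a zero-divisor with rank σ(u) = r. Let S = {g_{i_1}, …, g_{i_r}} ⊆ G be such that (s·u)_{s∈S} is R-linearly independent, W the R-span of S, and C = {xu : x ∈ W}. Let v̄_1, …, v̄_{n−r} be column vectors forming a basis of the right null space {x̄ ∈ R^n : σ(u)x̄ = 0}, and for each i let v_i ∈ RG be the unique element whose RG-matrix σ(v_i) has first column equal to v̄_i (i.e. the coefficient of g_j⁻¹g_1 in v_i is the j-th entry of v̄_i). Then for every y ∈ RG: y ∈ C if and only if y·v_i = 0 for all i = 1, …, n−r. -/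
open LinearMap Submodule Matrix

theorem Matrix.span_row_le_span_row_of_ker_le {K m n l : Type*} [Field K] [Finite m]
    [Fintype n] [DecidableEq n] {A : Matrix m n K} {B : Matrix l n K}
    (h : ker A.mulVecLin ≤ ker B.mulVecLin) :
    span K (Set.range B.row) ≤ span K (Set.range A.row) := by
  rw [span_le]
  rintro _ ⟨k, rfl⟩
  have hdual :
      dotProductEquiv K n (B k) ∈ span K (Set.range (dotProductEquiv K n ∘ A.row)) := by
    refine mem_span_of_iInf_ker_le_ker fun x hx => ?_
    have hAx : A *ᵥ x = 0 := funext fun i => (mem_iInf _).1 hx i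
    exact congrFun (h hAx) k
  rw [Set.range_comp] at hdual
  exact (apply_mem_span_image_iff_mem_span (f := (dotProductEquiv K n).toLinearMap)
    (dotProductEquiv K n).injective).1 hdual

theorem rgMatrix_mul_s8 {R G : Type*} [Semiring R] [Group G] [Fintype G] {n : ℕ}
    (g : Fin n ≃ G) (x w : MonoidAlgebra R G) :
    rgMatrix g (x * w) = rgMatrix g x * rgMatrix g w := by
  ext i j
  simp only [rgMatrix, Matrix.mul_apply, Matrix.of_apply]
  rw [MonoidAlgebra.coeff_mul_apply_left, Finsupp.sum_fintype _ _ (by simp)]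
  refine (Fintype.sum_equiv (g.trans (Equiv.mulLeft (g i)⁻¹)) _ _ fun k => ?_).symm
  simp only [Equiv.trans_apply, Equiv.coe_mulLeft]
  congr 2
  group

section Coordinates

variable {R G : Type*} [Semiring R] [Group G] [Fintype G] {n : ℕ}
  (g : Fin n ≃ G) (k : Fin n)

variable (R) in
noncomputable def rgMatrixColEquiv : MonoidAlgebra R G ≃ₗ[R] (Fin n → R) :=
  (MonoidAlgebra.coeffLinearEquiv R).trans <| (Finsupp.linearEquivFunOnFinite R R G).trans <|
    LinearEquiv.funCongrLeft R R (g.trans ((Equiv.inv G).trans (Equiv.mulRight (g k))))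

variable (R) in
noncomputable def rgMatrixRowEquiv : MonoidAlgebra R G ≃ₗ[R] (Fin n → R) :=
  (MonoidAlgebra.coeffLinearEquiv R).trans <| (Finsupp.linearEquivFunOnFinite R R G).trans <|
    LinearEquiv.funCongrLeft R R (g.trans (Equiv.mulLeft (g k)⁻¹))

@[simp]
theorem rgMatrixColEquiv_apply (w : MonoidAlgebra R G) (j : Fin n) :
    rgMatrixColEquiv R g k w j = rgMatrix g w j k :=
  rfl

@[simp]
theorem rgMatrixRowEquiv_apply (w : MonoidAlgebra R G) (j : Fin n) :
    rgMatrixRowEquiv R g k w j = rgMatrix g w k j :=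
  rfl

theorem rgMatrixColEquiv_mul (x w : MonoidAlgebra R G) :
    rgMatrixColEquiv R g k (x * w) = rgMatrix g x *ᵥ rgMatrixColEquiv R g k w := by
  ext j
  simp [rgMatrix_mul_s8, Matrix.mul_apply, Matrix.mulVec, dotProduct]

theorem rgMatrixRowEquiv_mul (x w : MonoidAlgebra R G) :
    rgMatrixRowEquiv R g k (x * w) = rgMatrixRowEquiv R g k x ᵥ* rgMatrix g w := by
  ext j
  simp [rgMatrix_mul_s8, Matrix.mul_apply, Matrix.vecMul, dotProduct]

end Coordinates

section Multiplication

variable {R G : Type*} [CommSemiring R] [Group G] [Fintype G] {n : ℕ}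
  (g : Fin n ≃ G) (k : Fin n)

theorem ker_mulLeft_eq_comap_rgMatrixColEquiv (u : MonoidAlgebra R G) :
    ker (mulLeft R u) =
      (ker (rgMatrix g u).mulVecLin).comap (rgMatrixColEquiv R g k).toLinearMap := by
  ext w
  simp [← rgMatrixColEquiv_mul]

theorem map_range_mulRight_rgMatrixRowEquiv (u : MonoidAlgebra R G) :
    (range (mulRight R u)).map (rgMatrixRowEquiv R g k).toLinearMap =
      range (rgMatrix g u).vecMulLinear := by
  have hcomm : (rgMatrixRowEquiv R g k).toLinearMap ∘ₗ mulRight R u =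
      (rgMatrix g u).vecMulLinear ∘ₗ rgMatrixRowEquiv R g k :=
    LinearMap.ext fun w => rgMatrixRowEquiv_mul g k w u
  rw [← range_comp, hcomm, range_comp_of_range_eq_top _ (LinearEquiv.range _)]

end Multiplication

theorem finrank_range_mulRight {R G : Type*} [Field R] [Group G] [Fintype G] {n : ℕ}
    (g : Fin n ≃ G) (u : MonoidAlgebra R G) :
    Module.finrank R (range (mulRight R u)) = (rgMatrix g u).rank := by
  rw [← (rgMatrixRowEquiv R g (g.symm 1)).finrank_map_eq, map_range_mulRight_rgMatrixRowEquiv,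
    ← Matrix.rank_transpose, Matrix.rank, Matrix.mulVecLin_transpose]

theorem mem_range_mulRight_iff_ker_mulLeft_le {R G : Type*} [Field R] [Group G] [Fintype G]
    {u y : MonoidAlgebra R G} :
    y ∈ range (mulRight R u) ↔ ker (mulLeft R u) ≤ ker (mulLeft R y) := by
  constructor
  · rintro ⟨z, rfl⟩ w (hw : u * w = 0)
    change z * u * w = 0
    rw [mul_assoc, hw, mul_zero]
  · intro h
    let g := (Fintype.equivFin G).symm
    let k : Fin (Fintype.card G) := g.symm 1
    have hker : ker (rgMatrix g u).mulVecLin ≤ ker (rgMatrix g y).mulVecLin := by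
      rwa [ker_mulLeft_eq_comap_rgMatrixColEquiv g k, ker_mulLeft_eq_comap_rgMatrixColEquiv g k,
        comap_le_comap_iff_of_surjective (rgMatrixColEquiv R g k).surjective] at h
    have hrow : rgMatrixRowEquiv R g k y ∈ range (rgMatrix g u).vecMulLinear := by
      rw [range_vecMulLinear]
      exact Matrix.span_row_le_span_row_of_ker_le hker (subset_span ⟨k, rfl⟩)
    rwa [← map_range_mulRight_rgMatrixRowEquiv, mem_map_equiv,
      LinearEquiv.symm_apply_apply] at hrow

theorem stmt8_general {R : Type*} [Field R] {G : Type*} [Group G] {n r : ℕ} [NeZero n]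
    (g : Fin n ≃ G) (u : MonoidAlgebra R G)
    (hru : (rgMatrix g u).rank = r)
    (S : Finset G) (hcard : S.card = r)
    (hind : LinearIndependent R fun s : S => MonoidAlgebra.of R G (s : G) * u)
    (vb : Fin (n - r) → (Fin n → R))
    (hvb_span : Submodule.span R (Set.range vb) = LinearMap.ker (rgMatrix g u).mulVecLin)
    (v : Fin (n - r) → MonoidAlgebra R G)
    (hv : ∀ (i : Fin (n - r)) (j : Fin n), rgMatrix g (v i) j 0 = vb i j)
    (y : MonoidAlgebra R G) :
    (∃ x ∈ Submodule.span R (MonoidAlgebra.of R G '' (S : Set G)), y = x * u) ↔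
      ∀ i, y * v i = 0 := by
  have : Fintype G := Fintype.ofEquiv (Fin n) g
  have hv_span : span R (Set.range v) = ker (mulLeft R u) := by
    have hv_eq : v = (rgMatrixColEquiv R g 0).symm ∘ vb :=
      funext fun i => (rgMatrixColEquiv R g 0).eq_symm_apply.2 (funext (hv i))
    rw [ker_mulLeft_eq_comap_rgMatrixColEquiv g 0, ← hvb_span, hv_eq, Set.range_comp,
      span_image_linearEquiv, map_equiv_eq_comap_symm, LinearEquiv.symm_symm]
  have hWu : (span R (MonoidAlgebra.of R G '' (S : Set G))).map (mulRight R u) =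
      range (mulRight R u) := by
    refine eq_of_le_of_finrank_le map_le_range ?_
    rw [finrank_range_mulRight g, hru, Submodule.map_span, Set.image_image, ← hcard,
      ← Fintype.card_coe, ← finrank_span_eq_card hind, Set.image_eq_range]
    exact le_rfl
  calc (∃ x ∈ span R (MonoidAlgebra.of R G '' (S : Set G)), y = x * u)
      ↔ y ∈ range (mulRight R u) := by simp [← hWu, eq_comm]
    _ ↔ ker (mulLeft R u) ≤ ker (mulLeft R y) := mem_range_mulRight_iff_ker_mulLeft_le
    _ ↔ ∀ i, y * v i = 0 := by simp [← hv_span, span_le, Set.range_subset_iff]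

/-- let `u` be a zero-divisor with `rank σ(u) = r`, `S ⊆ G` a set of `r`
group elements with `(s • u)_{s ∈ S}` linearly independent, `W` the span of `S` and
`C = {x * u : x ∈ W}`. Let `v̄_1, …, v̄_{n-r}` be a basis of the right null space
`{x̄ : σ(u) x̄ = 0}` and `v_i ∈ RG` the elements whose RG-matrices have first column
`v̄_i`. Then `y ∈ C` iff `y * v_i = 0` for all `i`. -/
theorem stmt8 {R : Type*} [Field R] {G : Type*} [Group G] {n r : ℕ} [NeZero n]
    (g : Fin n ≃ G) (u : MonoidAlgebra R G)
    (hzd : ∃ w : MonoidAlgebra R G, w ≠ 0 ∧ u * w = 0)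
    (hru : (rgMatrix g u).rank = r)
    (S : Finset G) (hcard : S.card = r)
    (hind : LinearIndependent R fun s : S => MonoidAlgebra.of R G (s : G) * u)
    (vb : Fin (n - r) → (Fin n → R))
    (hvb_indep : LinearIndependent R vb)
    (hvb_span : Submodule.span R (Set.range vb) = LinearMap.ker (rgMatrix g u).mulVecLin)
    (v : Fin (n - r) → MonoidAlgebra R G)
    (hv : ∀ (i : Fin (n - r)) (j : Fin n), rgMatrix g (v i) j 0 = vb i j)
    (y : MonoidAlgebra R G) :
    (∃ x ∈ Submodule.span R (MonoidAlgebra.of R G '' (S : Set G)), y = x * u) ↔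
      ∀ i, y * v i = 0 :=
  stmt8_general g u hru S hcard hind vb hvb_span v hv y
end
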